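/- Let S be a real symmetric n×n matrix that is positive semidefinite and such that I − S is positive definite. Then, in the Loewner order, −½S² ⪯ √(I − S) − I + ½S ⪯ 0; equivalently, 0 ⪯ I − ½S − √(I − S) ⪯ ½S². -/

import Mathlib

/-!
Put `X = √(I - S)`, so that `S = I - X²`. Both bounds are polynomial identities in the single
matrix `X`:
`I - ½S - X = ½(X - I)²` and `X - I + ½S + ½S² = ½(X - I)(X² + 2X)(X - I)`,
and the right-hand sides are positive semidefinite because `X` is.
-/

open Matrix

open scoped ComplexOrder in
/-- The positive semidefinite square root of a positive semidefinite matrix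
(the definition of `Matrix.PosSemidef.sqrt` in the older Mathlib, removed since). -/
noncomputable def Matrix.PosSemidef.sqrt {n : Type*} [Fintype n] [DecidableEq n] {𝕜 : Type*}
    [RCLike 𝕜] {A : Matrix n n 𝕜} (hA : PosSemidef A) : Matrix n n 𝕜 :=
  hA.1.eigenvectorUnitary.1 * diagonal ((↑) ∘ (√·) ∘ hA.1.eigenvalues) *
  (star hA.1.eigenvectorUnitary : Matrix n n 𝕜)

open scoped ComplexOrder

section Algebra

variable {R : Type*} [Ring R] [Algebra ℝ R]

lemma sub_one_add_half_smul_one_sub_mul_self (X : R) :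
    X - 1 + (1 / 2 : ℝ) • (1 - X * X) = -((1 / 2 : ℝ) • ((X - 1) * (X - 1))) := by
  noncomm_ring
  module

lemma sub_one_add_half_smul_one_sub_mul_self_add_half_smul_sq (X : R) :
    X - 1 + (1 / 2 : ℝ) • (1 - X * X) + (1 / 2 : ℝ) • ((1 - X * X) * (1 - X * X)) =
      (1 / 2 : ℝ) • ((X - 1) * (X * X + (X + X)) * (X - 1)) := by
  noncomm_ring
  module

end Algebra

namespace Matrix

variable {n 𝕜 : Type*} [Fintype n] [DecidableEq n] [RCLike 𝕜]

lemma PosSemidef.posSemidef_sqrt {A : Matrix n n 𝕜} (hA : A.PosSemidef) :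
    hA.sqrt.PosSemidef := by
  have hD : (diagonal ((↑) ∘ (√·) ∘ hA.1.eigenvalues) : Matrix n n 𝕜).PosSemidef := by
    rw [posSemidef_diagonal_iff]
    intro i
    simp [Real.sqrt_nonneg]
  exact hD.mul_mul_conjTranspose_same hA.1.eigenvectorUnitary.1

lemma PosSemidef.sqrt_mul_self {A : Matrix n n 𝕜} (hA : A.PosSemidef) :
    hA.sqrt * hA.sqrt = A := by
  have hU : (star hA.1.eigenvectorUnitary : Matrix n n 𝕜) * hA.1.eigenvectorUnitary.1 = 1 :=
    Unitary.coe_star_mul_self _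
  conv_rhs => rw [hA.1.spectral_theorem, Unitary.conjStarAlgAut_apply]
  simp only [PosSemidef.sqrt, mul_assoc]
  rw [← mul_assoc (star _ : Matrix _ _ 𝕜), hU, one_mul, ← mul_assoc (diagonal _),
    diagonal_mul_diagonal]
  congr 3
  funext i
  simp [← RCLike.ofReal_mul, Real.mul_self_sqrt (hA.eigenvalues_nonneg i)]

lemma posSemidef_neg_sub_one_add_half_smul_one_sub_mul_self {X : Matrix n n 𝕜}
    (hX : X.IsHermitian) : (-(X - 1 + (1 / 2 : ℝ) • (1 - X * X))).PosSemidef := by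
  have hX1 : (X - 1)ᴴ = X - 1 := by rw [conjTranspose_sub, hX.eq, conjTranspose_one]
  have h := (posSemidef_conjTranspose_mul_self (X - 1)).smul (by norm_num : (0 : ℝ) ≤ 1 / 2)
  rw [hX1] at h
  rwa [sub_one_add_half_smul_one_sub_mul_self, neg_neg]

lemma PosSemidef.posSemidef_sub_one_add_half_smul_one_sub_mul_self_add_half_smul_sq
    {X : Matrix n n 𝕜} (hX : X.PosSemidef) :
    (X - 1 + (1 / 2 : ℝ) • (1 - X * X) + (1 / 2 : ℝ) • ((1 - X * X) * (1 - X * X))).PosSemidef := by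
  have hX1 : (X - 1)ᴴ = X - 1 := by rw [conjTranspose_sub, hX.isHermitian.eq, conjTranspose_one]
  have hXX : (X * X).PosSemidef := by
    simpa only [hX.isHermitian.eq] using posSemidef_conjTranspose_mul_self X
  have h := ((hXX.add (hX.add hX)).conjTranspose_mul_mul_same (X - 1)).smul
    (by norm_num : (0 : ℝ) ≤ 1 / 2)
  rw [hX1] at h
  rwa [sub_one_add_half_smul_one_sub_mul_self_add_half_smul_sq]

end Matrix

theorem stmt7_general {n : ℕ} (S : Matrix (Fin n) (Fin n) ℝ)
    (hpd : (1 - S).PosDef) :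
    ((PosSemidef.sqrt hpd.posSemidef - 1 + (1 / 2 : ℝ) • S) - (-((1 / 2 : ℝ) • (S * S)))).PosSemidef ∧
      (0 - (PosSemidef.sqrt hpd.posSemidef - 1 + (1 / 2 : ℝ) • S)).PosSemidef := by
  have hX := hpd.posSemidef.posSemidef_sqrt
  have hXX := hpd.posSemidef.sqrt_mul_self
  generalize PosSemidef.sqrt hpd.posSemidef = X at hX hXX ⊢
  obtain rfl : S = 1 - X * X := by rw [hXX, sub_sub_cancel]
  rw [sub_neg_eq_add, zero_sub]
  exact ⟨hX.posSemidef_sub_one_add_half_smul_one_sub_mul_self_add_half_smul_sq,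
    posSemidef_neg_sub_one_add_half_smul_one_sub_mul_self hX.isHermitian⟩

/-- Let `S` be a real symmetric positive semidefinite `n × n` matrix
such that `I - S` is positive definite.  Then, in the Loewner order,
`-½ S² ⪯ √(I - S) - I + ½ S ⪯ 0`; equivalently `0 ⪯ I - ½ S - √(I - S) ⪯ ½ S²`.
Here the square root is the unique positive (semi)definite square root, and `A ⪯ B`
means that `B - A` is positive semidefinite. -/
theorem stmt7 {n : ℕ} (S : Matrix (Fin n) (Fin n) ℝ)
    (hS : Sᵀ = S) (hpsd : S.PosSemidef) (hpd : (1 - S).PosDef) :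
    ((PosSemidef.sqrt hpd.posSemidef - 1 + (1 / 2 : ℝ) • S) - (-((1 / 2 : ℝ) • (S * S)))).PosSemidef ∧
      (0 - (PosSemidef.sqrt hpd.posSemidef - 1 + (1 / 2 : ℝ) • S)).PosSemidef :=
  stmt7_general S hpd
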